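/- arXiv:2510.09811 — 2 statements merged into one kernel-verified Lean document; each statement's English description precedes it below -/
import Mathlib

section
/- Let ℓ ≥ 1 and let C be a commutative unital ℂ-algebra containing an invertible element g and elements e₀ = 1, e₁, …, e_{2ℓ} satisfying the reciprocal relations g^{2ℓ−i}·e_i = e_{2ℓ}·e_{2ℓ−i} for all i = 0, 1, …, 2ℓ−1. Suppose e_{2ℓ} = ε·g^ℓ for a sign ε ∈ {1, −1}. Then e_{ℓ+i} = ε·g^i·e_{ℓ−i} for all i = 0, 1, …, ℓ. In particular, if ε = −1 then e_ℓ = 0. -/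
/-!
The reciprocal relation with index `ℓ - i` reads `g^(ℓ+i) e_{ℓ-i} = ε g^ℓ e_{ℓ+i}`; cancelling the
unit `g^ℓ` and multiplying by `ε = ε⁻¹` gives `e_{ℓ+i} = ε g^i e_{ℓ-i}`. For `i = 0` and `ε = -1`
this says `e_ℓ = -e_ℓ`, which forces `e_ℓ = 0` since `2` is invertible in a `ℂ`-algebra.
-/

theorem eq_mul_of_pow_add_mul_eq {M : Type*} [CommMonoid M] {g ε x y : M} {m n : ℕ}
    (hg : IsUnit g) (hε : ε * ε = 1) (h : g ^ (m + n) * x = ε * g ^ m * y) :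
    y = ε * g ^ n * x := by
  have hcancel : g ^ n * x = ε * y :=
    (hg.pow m).mul_left_cancel <| by rw [← mul_assoc, ← pow_add, h, mul_left_comm, mul_assoc]
  calc y = ε * ε * y := by rw [hε, one_mul]
    _ = ε * g ^ n * x := by rw [mul_assoc, ← hcancel, mul_assoc]

theorem even_component_resolution_general
    {C : Type*} [CommRing C] [Algebra ℂ C]
    (ℓ : ℕ) (hℓ : 1 ≤ ℓ) (g : C) (hg : IsUnit g)
    (e : ℕ → C)
    (hrec : ∀ i, i < 2 * ℓ → g ^ (2 * ℓ - i) * e i = e (2 * ℓ) * e (2 * ℓ - i))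
    (ε : C) (hε : ε = 1 ∨ ε = -1)
    (htop : e (2 * ℓ) = ε * g ^ ℓ) :
    (∀ i, i ≤ ℓ → e (ℓ + i) = ε * g ^ i * e (ℓ - i)) ∧ (ε = -1 → e ℓ = 0) := by
  have hε_sq : ε * ε = 1 := by rcases hε with rfl | rfl <;> norm_num
  have resolution : ∀ i, i ≤ ℓ → e (ℓ + i) = ε * g ^ i * e (ℓ - i) := by
    intro i hi
    have h := hrec (ℓ - i) (by omega)
    rw [show 2 * ℓ - (ℓ - i) = ℓ + i by omega, htop] at h
    exact eq_mul_of_pow_add_mul_eq hg hε_sq h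
  refine ⟨resolution, fun hneg => ?_⟩
  have h_middle : e ℓ = -e ℓ := by simpa [hneg] using resolution 0 ℓ.zero_le
  have := IsAddTorsionFree.of_isTorsionFree ℂ C
  exact self_eq_neg.mp h_middle

/-- resolution of the reciprocal relations in the even case `k = 2ℓ`.
If `g` is invertible, `e₀ = 1`, the reciprocal relations `g^{2ℓ−i}·e_i = e_{2ℓ}·e_{2ℓ−i}`
hold for `i = 0, …, 2ℓ−1`, and `e_{2ℓ} = ε·g^ℓ` for a sign `ε`, then
`e_{ℓ+i} = ε·g^i·e_{ℓ−i}` for `i = 0, …, ℓ`; in particular `e_ℓ = 0` when `ε = -1`. -/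
theorem even_component_resolution
    {C : Type*} [CommRing C] [Algebra ℂ C]
    (ℓ : ℕ) (hℓ : 1 ≤ ℓ) (g : C) (hg : IsUnit g)
    (e : ℕ → C) (he0 : e 0 = 1)
    (hrec : ∀ i, i < 2 * ℓ → g ^ (2 * ℓ - i) * e i = e (2 * ℓ) * e (2 * ℓ - i))
    (ε : C) (hε : ε = 1 ∨ ε = -1)
    (htop : e (2 * ℓ) = ε * g ^ ℓ) :
    (∀ i, i ≤ ℓ → e (ℓ + i) = ε * g ^ i * e (ℓ - i)) ∧ (ε = -1 → e ℓ = 0) :=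
  even_component_resolution_general ℓ hℓ g hg e hrec ε hε htop
end

section
/- Let F be a Yang–Baxter matrix on V = ℂ^N, let A be a unital associative ℂ-algebra, and let M be any N×N matrix with entries in A. Then for every i ≥ 1 and every j with 1 ≤ j ≤ i, one has M_{\bar j}·Z^{(i)} = Z^{(i)}·M_{\underline{i−j+1}} as operators on V^{⊗i} with coefficients in A. -/
open Matrix BigOperators
open scoped Classical

noncomputable section

/-- Operators on `V^{⊗n}`, `V = ℂ^N`, with entries in `A`. -/
abbrev Op (N n : ℕ) (A : Type*) := Matrix (Fin n → Fin N) (Fin n → Fin N) A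

variable {N : ℕ}

/-- Embedding of a two-site operator at tensor factors `i`, `j` (identity elsewhere). -/
def emb2 {A : Type*} [Semiring A] {n : ℕ} (i j : Fin n) (X : Op N 2 A) : Op N n A :=
  fun f g => if ∀ k, k ≠ i → k ≠ j → f k = g k then X ![f i, f j] ![g i, g j] else 0

/-- `X_p`: a two-site operator acting at the adjacent factors `p`, `p+1` (0-based). -/
def opAt {A : Type*} [Semiring A] (n p : ℕ) (X : Op N 2 A) : Op N n A :=
  if h : p + 1 < n then emb2 ⟨p, Nat.lt_of_succ_lt h⟩ ⟨p + 1, h⟩ X else 1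

/-- Embedding of a one-site operator at tensor factor `i`. -/
def emb1 {A : Type*} [Semiring A] {n : ℕ} (i : Fin n) (Z : Matrix (Fin N) (Fin N) A) :
    Op N n A :=
  fun f g => if ∀ k, k ≠ i → f k = g k then Z (f i) (g i) else 0

/-- `Z_p`: a one-site operator acting at factor `p` (0-based). -/
def matAt {A : Type*} [Semiring A] (n p : ℕ) (Z : Matrix (Fin N) (Fin N) A) : Op N n A :=
  if h : p < n then emb1 ⟨p, h⟩ Z else 1

/-- Partial trace over the factors in `S`, re-embedded with identity on the factors in `S`. -/
def ptr {A : Type*} [Semiring A] {n : ℕ} (S : Finset (Fin n)) (X : Op N n A) : Op N n A :=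
  fun f g =>
    if ∀ k ∈ S, f k = g k then
      ∑ h : Fin n → Fin N,
        if ∀ k, k ∉ S → h k = f k then X h (fun k => if k ∈ S then h k else g k) else 0
    else 0

/-- Full trace. -/
def trAll {A : Type*} [Semiring A] {n : ℕ} (X : Op N n A) : A := ∑ f, X f f

/-- Trace over all tensor factors except the factor `0`, yielding an `N×N` matrix. -/
def trRest {n : ℕ} (X : Op N (n + 1) ℂ) : Matrix (Fin N) (Fin N) ℂ :=
  fun a b => ∑ f : Fin n → Fin N, X (Fin.cons a f) (Fin.cons b f)

/-- The permutation (flip) operator on `V ⊗ V`. -/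
def flipP (N : ℕ) : Op N 2 ℂ := fun f g => if f 0 = g 1 ∧ f 1 = g 0 then 1 else 0

/-- `D_R = Tr_(2) Ψ_R`. -/
def Dmat (Ψ : Op N 2 ℂ) : Matrix (Fin N) (Fin N) ℂ := fun a b => ∑ c, Ψ ![a, c] ![b, c]

/-- The product `∏_{k ∈ S} (Dm)_k` of copies of a one-site operator over the factors in `S`. -/
def Dset {n : ℕ} (Dm : Matrix (Fin N) (Fin N) ℂ) (S : Finset (Fin n)) : Op N n ℂ :=
  fun f g => if ∀ k, k ∉ S → f k = g k then ∏ k ∈ S, Dm (f k) (g k) else 0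

/-- `R` is an (invertible) Yang-Baxter matrix. -/
def IsYB (R : Op N 2 ℂ) : Prop :=
  IsUnit R ∧
    opAt 3 0 R * opAt 3 1 R * opAt 3 0 R = opAt 3 1 R * opAt 3 0 R * opAt 3 1 R

/-- `Ψ` is a skew inverse of `R`:  `Tr_(2) R₁ Ψ₂ = Tr_(2) Ψ₁ R₂ = P`. -/
def IsSkewPair (R Ψ : Op N 2 ℂ) : Prop :=
  ptr {1} (opAt 3 0 R * opAt 3 1 Ψ) = emb2 (0 : Fin 3) (2 : Fin 3) (flipP N) ∧
  ptr {1} (opAt 3 0 Ψ * opAt 3 1 R) = emb2 (0 : Fin 3) (2 : Fin 3) (flipP N)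

/-- q-number `(i)_q`. -/
def qnum (q : ℂ) (i : ℕ) : ℂ := (q ^ i - q⁻¹ ^ i) / (q - q⁻¹)

/-- `η = (q−μ)(q⁻¹+μ)/(μ(q−q⁻¹))`. -/
def etaC (q μ : ℂ) : ℂ := (q - μ) * (q⁻¹ + μ) / (μ * (q - q⁻¹))

/-- `K = (q·Id − R)(q⁻¹·Id + R)/(μ(q−q⁻¹))`. -/
def Kmat (q μ : ℂ) (R : Op N 2 ℂ) : Op N 2 ℂ :=
  (μ * (q - q⁻¹))⁻¹ • ((q • (1 : Op N 2 ℂ) - R) * (q⁻¹ • (1 : Op N 2 ℂ) + R))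

/-- Baxterized element `R⁻(x)`. -/
def Rminus (q μ : ℂ) (R : Op N 2 ℂ) (x : ℂ) : Op N 2 ℂ :=
  (1 : Op N 2 ℂ) + ((x - 1) / (q - q⁻¹)) • R + (μ * (x - 1) / (μ + q * x)) • Kmat q μ R

/-- Base conditions on the parameters `q`, `μ`. -/
def ParamOK (q μ : ℂ) : Prop :=
  q ≠ 0 ∧ q ≠ 1 ∧ q ≠ -1 ∧ μ ≠ 0 ∧ μ ≠ q ∧ μ ≠ -q⁻¹

/-- Conditions `q^{2j} ≠ 1`, `μ ≠ −q^{−2j+3}` for `j = 2, …, k`. -/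
def ParamRange (q μ : ℂ) (k : ℕ) : Prop :=
  ∀ j, 2 ≤ j → j ≤ k → q ^ (2 * j) ≠ 1 ∧ μ ≠ -q ^ (3 - 2 * (j : ℤ))

/-- `R` (with inverse `Rinv`) is a BMW-type Yang-Baxter matrix with parameters `q, μ`. -/
def IsBMW (q μ : ℂ) (R Rinv : Op N 2 ℂ) : Prop :=
  R * Rinv = 1 ∧ Rinv * R = 1 ∧
  R * Kmat q μ R = μ • Kmat q μ R ∧ Kmat q μ R * R = μ • Kmat q μ R ∧
  Kmat q μ R * Kmat q μ R = etaC q μ • Kmat q μ R ∧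
  (opAt 3 0 (Kmat q μ R) * opAt 3 1 (Kmat q μ R) * opAt 3 0 (Kmat q μ R)
      = opAt 3 0 (Kmat q μ R)) ∧
  (opAt 3 1 (Kmat q μ R) * opAt 3 0 (Kmat q μ R) * opAt 3 1 (Kmat q μ R)
      = opAt 3 1 (Kmat q μ R)) ∧
  ∀ E E' : Op N 2 ℂ, (E = R ∧ E' = Rinv) ∨ (E = Rinv ∧ E' = R) →
    (opAt 3 0 (Kmat q μ R) * opAt 3 1 E
        = opAt 3 0 (Kmat q μ R) * opAt 3 1 (Kmat q μ R) * opAt 3 0 E' ∧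
     opAt 3 1 (Kmat q μ R) * opAt 3 0 E
        = opAt 3 1 (Kmat q μ R) * opAt 3 0 (Kmat q μ R) * opAt 3 1 E' ∧
     opAt 3 1 E * opAt 3 0 (Kmat q μ R)
        = opAt 3 0 E' * opAt 3 1 (Kmat q μ R) * opAt 3 0 (Kmat q μ R) ∧
     opAt 3 0 E * opAt 3 1 (Kmat q μ R)
        = opAt 3 1 E' * opAt 3 0 (Kmat q μ R) * opAt 3 1 (Kmat q μ R))

/-- q-antisymmetrizer `A^{(m)}` acting on the `m` factors starting at factor `p` (0-based)
of `V^{⊗n}`. -/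
def asym (q μ : ℂ) (R : Op N 2 ℂ) (n : ℕ) : ℕ → ℕ → Op N n ℂ
  | _, 0 => 1
  | _, 1 => 1
  | p, (m + 2) =>
      (q ^ (m + 1) / qnum q (m + 2)) •
        (asym q μ R n p (m + 1) * opAt n (p + m) (Rminus q μ R ((q ^ (2 * (m + 1)))⁻¹)) *
          asym q μ R n p (m + 1))

/-- The contractor `C^{(2i)}` acting on the `2i` factors starting at factor `p` (0-based)
of `V^{⊗n}`; `contr q μ R n p i = C^{(2i)}`. -/
def contr (q μ : ℂ) (R : Op N 2 ℂ) (n : ℕ) : ℕ → ℕ → Op N n ℂ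
  | _, 0 => 1
  | p, 1 => (etaC q μ)⁻¹ • opAt n p (Kmat q μ R)
  | p, (i + 2) =>
      contr q μ R n (p + 1) (i + 1) * opAt n p (Kmat q μ R) *
        opAt n (p + 2 * i + 2) (Kmat q μ R) * contr q μ R n (p + 1) (i + 1)

/-- `R` has height `k`. -/
def HasHeight (q μ : ℂ) (R : Op N 2 ℂ) (k : ℕ) : Prop :=
  2 ≤ k ∧ (∀ i, 2 ≤ i → i ≤ k → asym q μ R k 0 i ≠ 0) ∧
    asym q μ R (k + 1) 1 k * opAt (k + 1) 0 (Rminus q μ R ((q ^ (2 * k))⁻¹)) *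
      asym q μ R (k + 1) 1 k = 0

/-- `R` is of orthogonal type `O(k)`: BMW type, height `k`, `μ = q^{1−k}`, `rk A^{(k)} = 1`. -/
def IsOrth (q μ : ℂ) (R Rinv : Op N 2 ℂ) (k : ℕ) : Prop :=
  IsBMW q μ R Rinv ∧ HasHeight q μ R k ∧ μ = q ^ (1 - (k : ℤ)) ∧
    (asym q μ R k 0 k).rank = 1

/-- `{R,F}` is a compatible pair:  `R₁F₂F₁ = F₂F₁R₂` and `R₂F₁F₂ = F₁F₂R₁`. -/
def CompatPair (R F : Op N 2 ℂ) : Prop :=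
  opAt 3 0 R * opAt 3 1 F * opAt 3 0 F = opAt 3 1 F * opAt 3 0 F * opAt 3 1 R ∧
  opAt 3 1 R * opAt 3 0 F * opAt 3 1 F = opAt 3 0 F * opAt 3 1 F * opAt 3 0 R

/-- Push a numeric operator into an `A`-valued operator. -/
def toA {A : Type*} [Semiring A] [Algebra ℂ A] {n : ℕ} (X : Op N n ℂ) : Op N n A :=
  X.map (algebraMap ℂ A)

/-- The copies `M_{\bar{i+1}}` of a quantum matrix:  `Mbar F Finv M n i = M_{\overline{i+1}}`. -/
def Mbar {A : Type*} [Semiring A] [Algebra ℂ A] (F Finv : Op N 2 ℂ)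
    (M : Matrix (Fin N) (Fin N) A) (n : ℕ) : ℕ → Op N n A
  | 0 => matAt n 0 M
  | (i + 1) => toA (opAt n i F) * Mbar F Finv M n i * toA (opAt n i Finv)

/-- The string `M_{1̄} M_{2̄} ⋯ M_{j̄}`. -/
def Mstr {A : Type*} [Semiring A] [Algebra ℂ A] (F Finv : Op N 2 ℂ)
    (M : Matrix (Fin N) (Fin N) A) (n : ℕ) : ℕ → Op N n A
  | 0 => 1
  | (j + 1) => Mstr F Finv M n j * Mbar F Finv M n j

/-- `M` is a quantum matrix for the pair `{R,F}`. -/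
def IsQMatrix {A : Type*} [Semiring A] [Algebra ℂ A] (R F Finv : Op N 2 ℂ)
    (M : Matrix (Fin N) (Fin N) A) : Prop :=
  toA (opAt 2 0 R) * Mbar F Finv M 2 0 * Mbar F Finv M 2 1 =
    Mbar F Finv M 2 0 * Mbar F Finv M 2 1 * toA (opAt 2 0 R)

/-- The contraction `g = η⁻¹ Tr_{R(1,2)}(M_{1̄}M_{2̄}K₁)`. -/
def qContr (q μ : ℂ) (R F Finv : Op N 2 ℂ) (Dm : Matrix (Fin N) (Fin N) ℂ)
    {A : Type*} [Semiring A] [Algebra ℂ A] (M : Matrix (Fin N) (Fin N) A) : A :=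
  (etaC q μ)⁻¹ •
    trAll (toA (Dset Dm (Finset.univ : Finset (Fin 2))) *
      (Mstr F Finv M 2 2 * toA (opAt 2 0 (Kmat q μ R))))

/-- The elementary sums `e_i = Tr_{R(1,…,i)}(M_{1̄}⋯M_{ī} A^{(i)})`. -/
def elemSum (q μ : ℂ) (R F Finv : Op N 2 ℂ) (Dm : Matrix (Fin N) (Fin N) ℂ)
    {A : Type*} [Semiring A] [Algebra ℂ A] (M : Matrix (Fin N) (Fin N) A) (i : ℕ) : A :=
  trAll (toA (Dset Dm (Finset.univ : Finset (Fin i))) *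
    (Mstr F Finv M i i * toA (asym q μ R i 0 i)))

/-- The increasing string `F₁F₂⋯F_j` (1-based), i.e. positions `0,…,j-1`. -/
def Fstr (n : ℕ) (F : Op N 2 ℂ) : ℕ → Op N n ℂ
  | 0 => 1
  | (j + 1) => Fstr n F j * opAt n j F

/-- The decreasing string `F_j⋯F₂F₁` (1-based), i.e. positions `j-1,…,0`. -/
def FstrDown (n : ℕ) (F : Op N 2 ℂ) : ℕ → Op N n ℂ
  | 0 => 1
  | (j + 1) => opAt n j F * FstrDown n F j

/-- The operator `O`. -/
def Oop (q μ : ℂ) (R Finv : Op N 2 ℂ) (k : ℕ) : Matrix (Fin N) (Fin N) ℂ :=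
  (qnum q k * (1 + q ^ ((2 : ℤ) - (k : ℤ))) / (q + q ^ ((1 : ℤ) - (k : ℤ)))) •
    trRest (asym q μ R (k + 1) 1 k * Fstr (k + 1) Finv k)

/-- The operator `O⁻¹`. -/
def OopInv (q μ : ℂ) (R F : Op N 2 ℂ) (k : ℕ) : Matrix (Fin N) (Fin N) ℂ :=
  (qnum q k * (1 + q ^ ((2 : ℤ) - (k : ℤ))) / (q + q ^ ((1 : ℤ) - (k : ℤ)))) •
    trRest (FstrDown (k + 1) F k * asym q μ R (k + 1) 1 k)

/-- The matrix `G`, `G₁ = Tr_(2,3)(K₂F₁⁻¹F₂⁻¹)`. -/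
def Gmat (q μ : ℂ) (R Finv : Op N 2 ℂ) : Matrix (Fin N) (Fin N) ℂ :=
  trRest (opAt 3 1 (Kmat q μ R) * opAt 3 0 Finv * opAt 3 1 Finv)

/-- The matrix `G⁻¹`, `(G⁻¹)₁ = Tr_(2,3)(F₂F₁K₂)`. -/
def GmatInv (q μ : ℂ) (R F : Op N 2 ℂ) : Matrix (Fin N) (Fin N) ℂ :=
  trRest (opAt 3 1 F * opAt 3 0 F * opAt 3 1 (Kmat q μ R))


/-- `Z^{(i)}`: `Z^{(1)} = Id`, `Z^{(i+1)} = (F₁F₂⋯F_i)·Z^{(i)}`. -/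
def Zop {N : ℕ} (F : Op N 2 ℂ) (n : ℕ) : ℕ → Op N n ℂ
  | 0 => 1
  | (i + 1) => Fstr n F i * Zop F n i

/-- Underlined copies: `M_{\underline{1}} = M₁`, `M_{\underline{i+1}} = F_i⁻¹M_{\underline{i}}F_i`;
`Munder F Finv M n j = M_{\underline{j+1}}`. -/
def Munder {N : ℕ} {A : Type*} [Semiring A] [Algebra ℂ A] (F Finv : Op N 2 ℂ)
    (M : Matrix (Fin N) (Fin N) A) (n : ℕ) : ℕ → Op N n A
  | 0 => matAt n 0 M
  | (j + 1) => toA (opAt n j Finv) * Munder F Finv M n j * toA (opAt n j F)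

/-!
The operator `Z^{(i)}` is the image of Garside's half twist `Δᵢ` under `σₚ ↦ F_{p+1}`, and the
braid relations make conjugation by `Δᵢ` reverse the generators: `Fₚ Z = Z F_{i-p}`. Since
`M_{\overline{j+1}}` and `M_{\underline{d}}` arise from `M_{\bar j}` and `M_{\underline{d+1}}`
by conjugation with `F_j` and `F_d`, the identity propagates from `j = 1` upwards. For `j = 1`,
write `Z^{(i)} = Z' · F₁ ⋯ F_{i-1}` where `Z'` is a word in `F₂, …, F_{i-1}`, which commute
with `M₁`, while `F₁ ⋯ F_{i-1}` intertwines `M₁` with `M_{\underline{i}}`.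
-/

section BraidFamily

variable {G : Type*} [Monoid G]

def ascProd (σ : ℕ → G) : ℕ → G
  | 0 => 1
  | j + 1 => ascProd σ j * σ j

def descProd (σ : ℕ → G) : ℕ → G
  | 0 => 1
  | j + 1 => σ j * descProd σ j

/-- Garside's half twist `Δᵢ = (σ₀ ⋯ σ_{i-2}) ⋯ (σ₀ σ₁) σ₀`. -/
def halfTwist (σ : ℕ → G) : ℕ → G
  | 0 => 1
  | i + 1 => ascProd σ i * halfTwist σ i

structure IsBraidFamily (σ : ℕ → G) (n : ℕ) : Prop where
  commute : ∀ p q, p + 2 ≤ q → q + 2 ≤ n → Commute (σ p) (σ q)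
  braid : ∀ p, p + 3 ≤ n → σ p * σ (p + 1) * σ p = σ (p + 1) * σ p * σ (p + 1)

theorem SemiconjBy.ascProd {x : G} {σ τ : ℕ → G} {j : ℕ}
    (h : ∀ k < j, SemiconjBy x (σ k) (τ k)) : SemiconjBy x (ascProd σ j) (ascProd τ j) := by
  induction j with
  | zero => exact SemiconjBy.one_right x
  | succ j ih => exact (ih fun k hk => h k (by omega)).mul_right (h j j.lt_succ_self)

theorem SemiconjBy.descProd {x : G} {σ τ : ℕ → G} {j : ℕ}
    (h : ∀ k < j, SemiconjBy x (σ k) (τ k)) : SemiconjBy x (descProd σ j) (descProd τ j) := by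
  induction j with
  | zero => exact SemiconjBy.one_right x
  | succ j ih => exact (h j j.lt_succ_self).mul_right (ih fun k hk => h k (by omega))

theorem SemiconjBy.halfTwist {x : G} {σ τ : ℕ → G} {i : ℕ}
    (h : ∀ k, k + 1 < i → SemiconjBy x (σ k) (τ k)) :
    SemiconjBy x (halfTwist σ i) (halfTwist τ i) := by
  induction i with
  | zero => exact SemiconjBy.one_right x
  | succ i ih =>
    exact (SemiconjBy.ascProd fun k hk => h k (by omega)).mul_right (ih fun k hk => h k (by omega))

namespace IsBraidFamily

variable {σ : ℕ → G} {n : ℕ}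

theorem semiconjBy_ascProd (hσ : IsBraidFamily σ n) {j k : ℕ} (hk : k + 2 ≤ j) (hj : j < n) :
    SemiconjBy (ascProd σ j) (σ k) (σ (k + 1)) := by
  induction j with
  | zero => omega
  | succ j ih =>
    obtain hkj | rfl := Nat.lt_or_eq_of_le (Nat.le_of_lt_succ hk)
    · exact (ih (by omega) (by omega)).mul_left (hσ.commute k j (by omega) (by omega)).symm
    · have hcomm : Commute (σ (k + 1)) (ascProd σ k) :=
        SemiconjBy.ascProd fun p hp => hσ.commute p (k + 1) (by omega) (by omega) |>.symm
      calc ascProd σ k * σ k * σ (k + 1) * σ k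
            = ascProd σ k * (σ k * σ (k + 1) * σ k) := by simp only [mul_assoc]
        _ = ascProd σ k * σ (k + 1) * (σ k * σ (k + 1)) := by
            rw [hσ.braid k (by omega)]; simp only [mul_assoc]
        _ = σ (k + 1) * (ascProd σ k * σ k * σ (k + 1)) := by
            rw [← hcomm.eq]; simp only [mul_assoc]

theorem semiconjBy_descProd (hσ : IsBraidFamily σ n) {j k : ℕ} (hk : k + 2 ≤ j) (hj : j < n) :
    SemiconjBy (descProd σ j) (σ (k + 1)) (σ k) := by
  induction j with
  | zero => omega
  | succ j ih =>
    obtain hkj | rfl := Nat.lt_or_eq_of_le (Nat.le_of_lt_succ hk)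
    · exact SemiconjBy.mul_left (hσ.commute k j (by omega) (by omega)).symm (ih (by omega) (by omega))
    · have hcomm : Commute (σ (k + 1)) (descProd σ k) :=
        SemiconjBy.descProd fun p hp => hσ.commute p (k + 1) (by omega) (by omega) |>.symm
      calc σ (k + 1) * (σ k * descProd σ k) * σ (k + 1)
            = σ (k + 1) * σ k * σ (k + 1) * descProd σ k := by
            rw [mul_assoc, mul_assoc, ← hcomm.eq]; simp only [mul_assoc]
        _ = σ k * (σ (k + 1) * (σ k * descProd σ k)) := by
            rw [← hσ.braid k (by omega)]; simp only [mul_assoc]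

theorem halfTwist_succ_eq_mul_descProd (hσ : IsBraidFamily σ n) {i : ℕ} (hi : i + 1 ≤ n) :
    halfTwist σ (i + 1) = halfTwist σ i * descProd σ i := by
  induction i with
  | zero => simp [halfTwist, ascProd, descProd]
  | succ i ih =>
    have hcomm : Commute (σ i) (halfTwist σ i) :=
      SemiconjBy.halfTwist fun k hk => (hσ.commute k i (by omega) (by omega)).symm
    show ascProd σ (i + 1) * halfTwist σ (i + 1) = ascProd σ i * halfTwist σ i * (σ i * descProd σ i)
    rw [ih (by omega)]
    show ascProd σ i * σ i * (halfTwist σ i * descProd σ i) = _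
    rw [mul_assoc, ← mul_assoc (σ i), hcomm.eq]
    simp only [mul_assoc]

theorem halfTwist_succ_eq_halfTwist_shift_mul (hσ : IsBraidFamily σ n) {i : ℕ} (hi : i < n) :
    halfTwist σ (i + 1) = halfTwist (fun k => σ (k + 1)) i * ascProd σ i :=
  SemiconjBy.halfTwist fun _ hk => hσ.semiconjBy_ascProd (by omega) hi

theorem semiconjBy_halfTwist (hσ : IsBraidFamily σ n) {i p q : ℕ} (hi : i ≤ n)
    (hpq : p + q + 2 = i) : SemiconjBy (halfTwist σ i) (σ q) (σ p) := by
  induction i generalizing p q with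
  | zero => omega
  | succ i ih =>
    rcases p with _ | p
    · rcases i with _ | _ | m
      · omega
      · obtain rfl : q = 0 := by omega
        have h2 : halfTwist σ 2 = σ 0 := by simp [halfTwist, ascProd]
        rw [h2]
        exact Commute.refl (σ 0)
      · rw [hσ.halfTwist_succ_eq_mul_descProd hi]
        obtain rfl : q = m + 1 := by omega
        exact (ih (by omega) (by omega : 0 + m + 2 = m + 2)).mul_left
          (hσ.semiconjBy_descProd le_rfl (by omega))
    · exact (hσ.semiconjBy_ascProd (by omega) (by omega)).mul_left (ih (by omega) (by omega))

theorem map {H : Type*} [Monoid H] {Φ : Type*} [FunLike Φ G H] [MonoidHomClass Φ G H] (f : Φ)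
    (hσ : IsBraidFamily σ n) : IsBraidFamily (f ∘ σ) n where
  commute p q h₁ h₂ := (hσ.commute p q h₁ h₂).map f
  braid p hp := by simp only [Function.comp_apply, ← map_mul, hσ.braid p hp]

end IsBraidFamily

end BraidFamily

section EmbedOp

variable {A : Type*} [Semiring A] {m m' n : ℕ}

def embedOp (ι : Fin m → Fin n) (X : Op N m A) : Op N n A :=
  fun f g => if ∀ k ∉ Set.range ι, f k = g k then X (f ∘ ι) (g ∘ ι) else 0

theorem embedOp_one (ι : Fin m → Fin n) : embedOp ι (1 : Op N m A) = 1 := by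
  ext f g
  have hext : (∀ k ∉ Set.range ι, f k = g k) → f ∘ ι = g ∘ ι → f = g := fun h hc =>
    funext fun k => by
      by_cases hk : k ∈ Set.range ι
      · obtain ⟨l, rfl⟩ := hk
        exact congrFun hc l
      · exact h k hk
  simp only [embedOp, Matrix.one_apply]
  split_ifs with h1 h2 h3 h3 <;> first | rfl | simp_all

theorem embedOp_mul {ι : Fin m → Fin n} (hι : ι.Injective) (X Y : Op N m A) :
    embedOp ι X * embedOp ι Y = embedOp ι (X * Y) := by
  ext f g
  rw [Matrix.mul_apply]
  by_cases hfg : ∀ k ∉ Set.range ι, f k = g k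
  · rw [embedOp, if_pos hfg, Matrix.mul_apply]
    have hext : ∀ u, ∀ k ∉ Set.range ι, Function.extend ι u f k = f k :=
      fun u k hk => Function.extend_apply' _ _ _ hk
    refine (Fintype.sum_of_injective (fun u => Function.extend ι u f)
      (fun u v huv => by simpa only [Function.extend_comp hι] using congrArg (· ∘ ι) huv) _ _ ?_ ?_).symm
    · intro h hh
      rw [embedOp, if_neg, zero_mul]
      refine fun hf => hh ⟨h ∘ ι, funext fun k => ?_⟩
      by_cases hk : k ∈ Set.range ι
      · obtain ⟨l, rfl⟩ := hk
        exact hι.extend_apply _ _ l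
      · exact (hext _ k hk).trans (hf k hk)
    · intro u
      simp only [embedOp, Function.extend_comp hι, if_pos fun k hk => (hext u k hk).symm,
        if_pos fun k hk => (hext u k hk).trans (hfg k hk)]
  · rw [embedOp, if_neg hfg]
    refine Finset.sum_eq_zero fun h _ => ?_
    simp only [embedOp]
    split_ifs with h1 h2
    · exact absurd (fun k hk => (h1 k hk).trans (h2 k hk)) hfg
    all_goals simp

theorem embedOp_embedOp {l : ℕ} {ι : Fin m → Fin n} (hι : ι.Injective) (κ : Fin l → Fin m)
    (X : Op N l A) : embedOp ι (embedOp κ X) = embedOp (ι ∘ κ) X := by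
  ext f g
  simp only [embedOp]
  by_cases h1 : ∀ k ∉ Set.range ι, f k = g k
  · by_cases h2 : ∀ k ∉ Set.range κ, (f ∘ ι) k = (g ∘ ι) k
    · rw [if_pos h1, if_pos h2, if_pos]
      · rfl
      · intro k hk
        by_cases hι' : k ∈ Set.range ι
        · obtain ⟨k', rfl⟩ := hι'
          exact h2 k' fun ⟨l', hl'⟩ => hk ⟨l', by simp [hl']⟩
        · exact h1 k hι'
    · rw [if_pos h1, if_neg h2, if_neg]
      refine fun h3 => h2 fun k' hk' => h3 (ι k') fun ⟨l', hl'⟩ => hk' ⟨l', hι hl'⟩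
  · rw [if_neg h1, if_neg]
    exact fun h3 => h1 fun k hk => h3 k fun ⟨l', hl'⟩ => hk ⟨κ l', hl'⟩

/-- The only intermediate index carrying a nonzero term agrees with `g` on the range of `ι`
and with `f` elsewhere. -/
theorem embedOp_mul_embedOp_apply {ι : Fin m → Fin n} {κ : Fin m' → Fin n}
    (hd : ∀ l l', ι l ≠ κ l') (X : Op N m A) (Y : Op N m' A) (f g : Fin n → Fin N) :
    (embedOp ι X * embedOp κ Y) f g =
      if ∀ k ∉ Set.range ι, k ∉ Set.range κ → f k = g k
      then X (f ∘ ι) (g ∘ ι) * Y (f ∘ κ) (g ∘ κ) else 0 := by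
  classical
  set h0 : Fin n → Fin N := fun k => if k ∈ Set.range ι then g k else f k
  have h0ι : h0 ∘ ι = g ∘ ι := funext fun l => if_pos ⟨l, rfl⟩
  have h0κ : h0 ∘ κ = f ∘ κ := funext fun l' => if_neg fun ⟨l, hl⟩ => hd l l' hl
  have h0f : ∀ k ∉ Set.range ι, h0 k = f k := fun k hk => if_neg hk
  rw [Matrix.mul_apply, Finset.sum_eq_single h0]
  · simp only [embedOp, h0ι, h0κ, if_pos fun k hk => (h0f k hk).symm]
    by_cases hc : ∀ k ∉ Set.range ι, k ∉ Set.range κ → f k = g k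
    · rw [if_pos hc, if_pos]
      intro k hk
      by_cases hkι : k ∈ Set.range ι
      · exact if_pos hkι
      · exact (h0f k hkι).trans (hc k hkι hk)
    · rw [if_neg hc, if_neg, mul_zero]
      exact fun hc' => hc fun k hkι hkκ => (h0f k hkι).symm.trans (hc' k hkκ)
  · intro h _ hne
    simp only [embedOp]
    split_ifs with hP hQ
    · refine absurd (funext fun k => ?_) hne
      by_cases hkι : k ∈ Set.range ι
      · obtain ⟨l, rfl⟩ := hkι
        exact (hQ (ι l) fun ⟨l', hl'⟩ => hd l l' hl'.symm).trans (if_pos ⟨l, rfl⟩).symm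
      · exact (hP k hkι).symm.trans (h0f k hkι).symm
    all_goals simp
  · exact fun h => absurd (Finset.mem_univ h0) h

theorem commute_embedOp {ι : Fin m → Fin n} {κ : Fin m' → Fin n} (hd : ∀ l l', ι l ≠ κ l')
    {X : Op N m A} {Y : Op N m' A} (hXY : ∀ r s r' s', Commute (X r s) (Y r' s')) :
    Commute (embedOp ι X) (embedOp κ Y) := by
  ext f g
  rw [embedOp_mul_embedOp_apply hd, embedOp_mul_embedOp_apply fun l' l h => hd l l' h.symm]
  simp only [(hXY _ _ _ _).eq]
  exact if_congr ⟨fun h k h1 h2 => h k h2 h1, fun h k h1 h2 => h k h2 h1⟩ rfl rfl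

end EmbedOp

section OpAt

variable {R : Type*} [Semiring R] {n : ℕ}

theorem emb2_eq_embedOp (i j : Fin n) (X : Op N 2 R) : emb2 i j X = embedOp ![i, j] X := by
  ext f g
  have hrange : ∀ k, k ∉ Set.range ![i, j] ↔ k ≠ i ∧ k ≠ j := by
    simp [Set.range, Fin.exists_fin_two, eq_comm]
  have hf : f ∘ ![i, j] = ![f i, f j] := by ext l; fin_cases l <;> rfl
  have hg : g ∘ ![i, j] = ![g i, g j] := by ext l; fin_cases l <;> rfl
  simp only [emb2, embedOp, hrange, hf, hg, and_imp]

theorem opAt_eq_embedOp {p : ℕ} (h : p + 1 < n) (X : Op N 2 R) :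
    opAt n p X = embedOp ![⟨p, by omega⟩, ⟨p + 1, h⟩] X := by
  rw [opAt, dif_pos h, emb2_eq_embedOp]

theorem opAt_mul {p : ℕ} (X Y : Op N 2 R) : opAt n p X * opAt n p Y = opAt n p (X * Y) := by
  by_cases h : p + 1 < n
  · rw [opAt_eq_embedOp h, opAt_eq_embedOp h, opAt_eq_embedOp h, embedOp_mul]
    intro l l' hl
    fin_cases l <;> fin_cases l' <;> simp_all [Fin.ext_iff]
  · simp only [opAt, dif_neg h, one_mul]

theorem opAt_one {p : ℕ} : opAt n p (1 : Op N 2 R) = 1 := by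
  by_cases h : p + 1 < n
  · rw [opAt_eq_embedOp h, embedOp_one]
  · rw [opAt, dif_neg h]

theorem opAt_add_eq_embedOp {m p q : ℕ} (hq : q + 1 < m) (hpm : p + m ≤ n) (X : Op N 2 R) :
    opAt n (p + q) X = embedOp (fun t : Fin m => (⟨p + t, by omega⟩ : Fin n)) (opAt m q X) := by
  rw [opAt_eq_embedOp hq, embedOp_embedOp (fun s t hst => by simpa [Fin.ext_iff] using hst),
    opAt_eq_embedOp (by omega)]
  congr 1
  ext l
  fin_cases l <;> simp [add_assoc]

theorem commute_opAt {p q : ℕ} (hpq : p + 2 ≤ q) {X Y : Op N 2 R}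
    (hXY : ∀ r s r' s', Commute (X r s) (Y r' s')) : Commute (opAt n p X) (opAt n q Y) := by
  by_cases hq : q + 1 < n
  · rw [opAt_eq_embedOp (by omega), opAt_eq_embedOp hq]
    refine commute_embedOp (fun l l' => ?_) hXY
    fin_cases l <;> fin_cases l' <;> simp [Fin.ext_iff] <;> omega
  · rw [show opAt n q Y = 1 from dif_neg hq]
    exact Commute.one_right _

theorem isBraidFamily_opAt {R : Type*} [CommSemiring R] {F : Op N 2 R}
    (hyb : opAt 3 0 F * opAt 3 1 F * opAt 3 0 F = opAt 3 1 F * opAt 3 0 F * opAt 3 1 F) :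
    IsBraidFamily (opAt n · F) n where
  commute p q hpq _ := commute_opAt hpq fun _ _ _ _ => Commute.all _ _
  braid p hp := by
    have hinj : (fun t : Fin 3 => (⟨p + t, by omega⟩ : Fin n)).Injective := fun s t hst => by
      simpa [Fin.ext_iff] using hst
    have h0 := opAt_add_eq_embedOp (p := p) (q := 0) (by omega) hp F
    have h1 := opAt_add_eq_embedOp (p := p) (q := 1) (by omega) hp F
    rw [add_zero] at h0
    simp only [h0, h1, embedOp_mul hinj, hyb]

end OpAt

theorem emb1_eq_embedOp {R : Type*} [Semiring R] {n : ℕ} (i : Fin n)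
    (Z : Matrix (Fin N) (Fin N) R) : emb1 i Z = embedOp ![i] (Z.submatrix (· 0) (· 0)) := by
  ext f g
  simp [emb1, embedOp, Set.range, eq_comm]

section ToA

variable {A : Type*} [Semiring A] [Algebra ℂ A] {n : ℕ}

theorem toA_mul (X Y : Op N n ℂ) : toA (X * Y) = (toA X : Op N n A) * toA Y :=
  Matrix.map_mul

theorem toA_one : (toA (1 : Op N n ℂ) : Op N n A) = 1 :=
  Matrix.map_one _ (map_zero _) (map_one _)

theorem toA_embedOp {m : ℕ} (ι : Fin m → Fin n) (X : Op N m ℂ) :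
    (toA (embedOp ι X) : Op N n A) = embedOp ι (toA X) := by
  ext f g
  simp only [toA, Matrix.map_apply, embedOp, apply_ite (algebraMap ℂ A), map_zero]

theorem commute_matAt_zero_toA_opAt_succ (M : Matrix (Fin N) (Fin N) A) (X : Op N 2 ℂ)
    (p : ℕ) : Commute (matAt n 0 M) (toA (opAt n (p + 1) X)) := by
  by_cases hp : p + 2 < n
  · rw [matAt, dif_pos (by omega), emb1_eq_embedOp, opAt_eq_embedOp hp, toA_embedOp]
    refine commute_embedOp (fun l l' => ?_) fun _ _ _ _ => (Algebra.commutes _ _).symm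
    fin_cases l
    fin_cases l' <;> simp [Fin.ext_iff]
  · rw [opAt, dif_neg hp, toA_one]
    exact Commute.one_right _

end ToA

section Copies

variable {A : Type*} [Semiring A] [Algebra ℂ A] {n : ℕ}

theorem isBraidFamily_toA_opAt {F : Op N 2 ℂ}
    (hyb : opAt 3 0 F * opAt 3 1 F * opAt 3 0 F = opAt 3 1 F * opAt 3 0 F * opAt 3 1 F) :
    IsBraidFamily (fun p => (toA (opAt n p F) : Op N n A)) n :=
  (isBraidFamily_opAt hyb).map (algebraMap ℂ A).mapMatrix

theorem toA_Fstr (F : Op N 2 ℂ) (j : ℕ) :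
    (toA (Fstr n F j) : Op N n A) = ascProd (fun p => toA (opAt n p F)) j := by
  induction j with
  | zero => exact toA_one
  | succ j ih => rw [Fstr, toA_mul, ih]; rfl

theorem toA_Zop (F : Op N 2 ℂ) (i : ℕ) :
    (toA (Zop F n i) : Op N n A) = halfTwist (fun p => toA (opAt n p F)) i := by
  induction i with
  | zero => exact toA_one
  | succ i ih => rw [Zop, toA_mul, ih, toA_Fstr]; rfl

variable (A) in
def opAtUnit (u : (Op N 2 ℂ)ˣ) (n p : ℕ) : (Op N n A)ˣ where
  val := toA (opAt n p (u : Op N 2 ℂ))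
  inv := toA (opAt n p ↑u⁻¹)
  val_inv := by rw [← toA_mul, opAt_mul, u.mul_inv, opAt_one, toA_one]
  inv_val := by rw [← toA_mul, opAt_mul, u.inv_mul, opAt_one, toA_one]

variable (u : (Op N 2 ℂ)ˣ) (M : Matrix (Fin N) (Fin N) A)

theorem opAtUnit_mul_Munder_succ (j : ℕ) :
    ↑(opAtUnit A u n j) * Munder ↑u ↑u⁻¹ M n (j + 1) * ↑(opAtUnit A u n j)⁻¹ =
      Munder ↑u ↑u⁻¹ M n j := by
  show ↑(opAtUnit A u n j) * (↑(opAtUnit A u n j)⁻¹ * Munder ↑u ↑u⁻¹ M n j *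
    ↑(opAtUnit A u n j)) * ↑(opAtUnit A u n j)⁻¹ = _
  simp [mul_assoc]

theorem toA_Fstr_mul_Munder (d : ℕ) :
    toA (Fstr n ↑u d) * Munder ↑u ↑u⁻¹ M n d = matAt n 0 M * toA (Fstr n ↑u d) := by
  induction d with
  | zero =>
    rw [Fstr, toA_one, one_mul, mul_one]
    rfl
  | succ d ih =>
    set v := opAtUnit A u n d
    rw [Fstr, toA_mul]
    show _ * (↑v⁻¹ * Munder ↑u ↑u⁻¹ M n d * ↑v) = _
    calc toA (Fstr n ↑u d) * ↑v * (↑v⁻¹ * Munder ↑u ↑u⁻¹ M n d * ↑v)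
        = toA (Fstr n ↑u d) * Munder ↑u ↑u⁻¹ M n d * ↑v := by simp [mul_assoc]
      _ = matAt n 0 M * (toA (Fstr n ↑u d) * ↑v) := by rw [ih, mul_assoc]

variable {u}

theorem semiconjBy_toA_Zop_Munder_matAt
    (hyb : opAt 3 0 (u : Op N 2 ℂ) * opAt 3 1 ↑u * opAt 3 0 ↑u =
      opAt 3 1 ↑u * opAt 3 0 ↑u * opAt 3 1 ↑u) :
    SemiconjBy (toA (Zop ↑u (n + 1) (n + 1))) (Munder ↑u ↑u⁻¹ M (n + 1) n) (matAt (n + 1) 0 M) := by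
  have hcomm : Commute (matAt (n + 1) 0 M)
      (halfTwist (fun k => toA (opAt (n + 1) (k + 1) (u : Op N 2 ℂ))) n) :=
    SemiconjBy.halfTwist fun k _ => commute_matAt_zero_toA_opAt_succ M _ k
  rw [toA_Zop, (isBraidFamily_toA_opAt hyb).halfTwist_succ_eq_halfTwist_shift_mul n.lt_add_one,
    ← toA_Fstr, SemiconjBy, mul_assoc, toA_Fstr_mul_Munder, ← mul_assoc, ← hcomm.eq, mul_assoc]

theorem semiconjBy_toA_Zop_Munder_Mbar
    (hyb : opAt 3 0 (u : Op N 2 ℂ) * opAt 3 1 ↑u * opAt 3 0 ↑u =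
      opAt 3 1 ↑u * opAt 3 0 ↑u * opAt 3 1 ↑u) {j : ℕ} (hj : j ≤ n) :
    SemiconjBy (toA (Zop ↑u (n + 1) (n + 1))) (Munder ↑u ↑u⁻¹ M (n + 1) (n - j))
      (Mbar ↑u ↑u⁻¹ M (n + 1) j) := by
  induction j with
  | zero => exact semiconjBy_toA_Zop_Munder_matAt M hyb
  | succ j ih =>
    obtain ⟨q, hq⟩ : ∃ q, n - j = q + 1 := ⟨n - (j + 1), by omega⟩
    rw [show n - (j + 1) = q by omega]
    have hv : SemiconjBy (toA (Zop ↑u (n + 1) (n + 1)))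
        (opAtUnit A u (n + 1) q : Op N (n + 1) A) (opAtUnit A u (n + 1) j) := by
      rw [toA_Zop]
      exact (isBraidFamily_toA_opAt hyb).semiconjBy_halfTwist le_rfl (by omega)
    rw [← opAtUnit_mul_Munder_succ]
    exact (hv.mul_right (hq ▸ ih (by omega))).mul_right hv.units_inv_right

end Copies

/-- Lemma 4.11: for any matrix `M` over `A` and any Yang-Baxter matrix
`F`, `M_{\bar j}·Z^{(i)} = Z^{(i)}·M_{\underline{i−j+1}}` for all `1 ≤ j ≤ i`. -/
theorem Mbar_Z_Munder
    {N : ℕ} (F Finv : Op N 2 ℂ)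
    {A : Type*} [Ring A] [Algebra ℂ A]
    (M : Matrix (Fin N) (Fin N) A)
    (hFyb : IsYB F) (hF : F * Finv = 1) (hF' : Finv * F = 1) :
    ∀ i : ℕ, 1 ≤ i → ∀ j : ℕ, 1 ≤ j → j ≤ i →
      Mbar F Finv M i (j - 1) * toA (Zop F i i) =
        toA (Zop F i i) * Munder F Finv M i (i - j) := by
  intro i hi j hj hji
  obtain ⟨n, rfl⟩ : ∃ n, i = n + 1 := ⟨i - 1, by omega⟩
  obtain ⟨j, rfl⟩ : ∃ j', j = j' + 1 := ⟨j - 1, by omega⟩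
  rw [Nat.add_sub_cancel, Nat.add_sub_add_right]
  exact (semiconjBy_toA_Zop_Munder_Mbar (u := ⟨F, Finv, hF, hF'⟩) M hFyb.2 (by omega)).eq.symm

end
end
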